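/- Let A12 ∈ ℝ^{n1×n2} have full column rank with n2 < n1, let R = I_{n1} − A12(A12ᵀA12)⁻¹A12ᵀ, let Ĩ ∈ ℝ^{n1×(n1−n2)} satisfy that RĨ has full column rank n1 − n2, let k be a positive integer, and let L ∈ ℝ^{n1^k × n1^k} satisfy rank(R^{⊗k} L R^{⊗k}) = (n1 − n2)^k. Set M̃ = M_k^{Ĩ}(A12), which has n1^k − (n1−n2)^k columns. Then the square block matrix [[L, M̃], [M̃ᵀ, 0]] of size 2n1^k − (n1−n2)^k is invertible; in particular, for every right-hand side (b, 0) the augmented linear system L ŵ + M̃ Ω = b, M̃ᵀ ŵ = 0 has a unique solution (ŵ, Ω). -/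

import Mathlib

/-!
Put `U = R Ĩ`, let `V₀` be any left inverse of `U` and `V = V₀ R`. Since the range of `R` is
`ker A12ᵀ = range U` (a dimension count), `U V = R`; moreover `V A12 = 0`, `V Ĩ = V U = 1`, and
`X = (A12ᵀ A12)⁻¹ A12ᵀ (1 - Ĩ V)` satisfies `X A12 = 1`, `X Ĩ = 0`. Tensoring these relations
factor by factor, `M_k^{Vᵀ}(Xᵀ)ᵀ` is a left inverse of `M̃`, `V^{⊗k} M̃ = 0`, `M̃ᵀ U^{⊗k} = 0`, and
`R^{⊗k} L R^{⊗k} = U^{⊗k} (V^{⊗k} L U^{⊗k}) V^{⊗k}` forces the `(n1-n2)^k`-square matrix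
`V^{⊗k} L U^{⊗k}` to be invertible. As `M̃` has `n1^k - (n1-n2)^k` columns, `ker M̃ᵀ` is exactly the
range of `U^{⊗k}`. So a kernel vector `(w, Ω)` of the saddle-point matrix has `w = U^{⊗k} y` with
`V^{⊗k} L U^{⊗k} y = 0`, whence `w = 0`, and then `M̃ Ω = 0` gives `Ω = 0`.
-/

open Matrix

noncomputable section

/-- Position-dependent Kronecker product of square matrices: the entry at
row `r` and column `c` is `∏ j, F j (r j) (c j)`. -/
def posKron {n k : ℕ} (F : Fin k → Matrix (Fin n) (Fin n) ℝ) :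
    Matrix (Fin k → Fin n) (Fin k → Fin n) ℝ :=
  Matrix.of fun r c => ∏ j, F j (r j) (c j)

/-- The `k`-fold Kronecker power `X^{⊗k}`. -/
def kronPow {n : ℕ} (k : ℕ) (X : Matrix (Fin n) (Fin n) ℝ) :
    Matrix (Fin k → Fin n) (Fin k → Fin n) ℝ :=
  posKron fun _ => X

/-- Number of columns of the `j`-th Kronecker factor in the `i`-th block of `M_k^B(A)`. -/
def mCol (q p n : ℕ) {k : ℕ} (i j : Fin k) : ℕ :=
  if j < i then q else if j = i then p else n

/-- The `i`-th block `B^{⊗(i-1)} ⊗ A ⊗ I_n^{⊗(k-i)}` of `M_k^B(A)`. -/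
def mBlock {n p q k : ℕ} (B : Matrix (Fin n) (Fin q) ℝ) (A : Matrix (Fin n) (Fin p) ℝ)
    (i : Fin k) : Matrix (Fin k → Fin n) (∀ j : Fin k, Fin (mCol q p n i j)) ℝ :=
  Matrix.of fun r c => ∏ j : Fin k,
    if h1 : j < i then B (r j) (Fin.cast (by simp [mCol, h1]) (c j))
    else if h2 : j = i then A (r j) (Fin.cast (by simp [mCol, h1, h2]) (c j))
    else (1 : Matrix (Fin n) (Fin n) ℝ) (r j) (Fin.cast (by simp [mCol, h1, h2]) (c j))

/-- The horizontal block concatenation `M_k^B(A)`, with blocks indexed by `i : Fin k`. -/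
def mFull {n p q : ℕ} (k : ℕ) (B : Matrix (Fin n) (Fin q) ℝ) (A : Matrix (Fin n) (Fin p) ℝ) :
    Matrix (Fin k → Fin n) (Σ i : Fin k, ∀ j : Fin k, Fin (mCol q p n i j)) ℝ :=
  Matrix.of fun r c => mBlock B A c.1 r c.2

namespace Matrix

theorem mulVec_injective_of_mul_eq_one {R l m : Type*} [CommSemiring R] [Fintype l] [Fintype m]
    [DecidableEq m] {M : Matrix l m R} {W : Matrix m l R} (h : W * M = 1) :
    Function.Injective M.mulVec := fun x y hxy => by
  simpa [mulVec_mulVec, h] using congrArg (W *ᵥ ·) hxy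

theorem existsUnique_of_isUnit_fromBlocks {R n m : Type*} [CommRing R] [Fintype n]
    [Fintype m] [DecidableEq n] [DecidableEq m] {A : Matrix n n R}
    {B : Matrix n m R} {C : Matrix m n R} {D : Matrix m m R} (h : IsUnit (fromBlocks A B C D))
    (b : n → R) (c : m → R) :
    ∃! p : (n → R) × (m → R), A *ᵥ p.1 + B *ᵥ p.2 = b ∧ C *ᵥ p.1 + D *ᵥ p.2 = c := by
  have hsolve (p : (n → R) × (m → R)) :
      (A *ᵥ p.1 + B *ᵥ p.2 = b ∧ C *ᵥ p.1 + D *ᵥ p.2 = c) ↔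
        fromBlocks A B C D *ᵥ Sum.elim p.1 p.2 = Sum.elim b c := by
    rw [fromBlocks_mulVec, Sum.elim_eq_iff, Sum.elim_comp_inl, Sum.elim_comp_inr]
  obtain ⟨v, hv⟩ := mulVec_surjective_iff_isUnit.mpr h (Sum.elim b c)
  refine ⟨(v ∘ Sum.inl, v ∘ Sum.inr), (hsolve _).mpr (by rwa [Sum.elim_comp_inl_inr]),
    fun p hp => ?_⟩
  obtain rfl : Sum.elim p.1 p.2 = v :=
    mulVec_injective_of_isUnit h (((hsolve p).mp hp).trans hv.symm)
  rfl

section Field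

variable {𝕜 n m r : Type*} [Field 𝕜] [Fintype m]

theorem mulVec_injective_iff_rank_eq {M : Matrix n m 𝕜} :
    Function.Injective M.mulVec ↔ M.rank = Fintype.card m := by
  have h := M.mulVecLin.finrank_range_add_finrank_ker
  rw [Module.finrank_fintype_fun_eq_card] at h
  change Function.Injective M.mulVecLin ↔ _
  rw [← LinearMap.ker_eq_bot, ← Submodule.finrank_eq_zero, rank]
  omega

theorem exists_mul_eq_one_of_mulVec_injective [Fintype n] [DecidableEq n] [DecidableEq m]
    {M : Matrix n m 𝕜} (hM : Function.Injective M.mulVec) : ∃ W : Matrix m n 𝕜, W * M = 1 := by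
  obtain ⟨g, hg⟩ := M.mulVecLin.exists_leftInverse_of_injective (LinearMap.ker_eq_bot.mpr hM)
  refine ⟨LinearMap.toMatrix' g, ?_⟩
  rw [← LinearMap.toMatrix'_toLin' M, ← LinearMap.toMatrix'_comp, Matrix.toLin'_apply', hg,
    LinearMap.toMatrix'_id]

theorem range_mulVecLin_eq_ker_transpose [Fintype n] [Fintype r] {M : Matrix n m 𝕜} {U : Matrix n r 𝕜}
    (hM : Function.Injective M.mulVec) (hU : Function.Injective U.mulVec) (hMU : Mᵀ * U = 0)
    (hcard : Fintype.card m + Fintype.card r = Fintype.card n) :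
    LinearMap.range U.mulVecLin = LinearMap.ker Mᵀ.mulVecLin := by
  refine Submodule.eq_of_le_of_finrank_eq ?_ ?_
  · rw [LinearMap.range_le_ker_iff, ← mulVecLin_mul, hMU, mulVecLin_zero]
  · have h := Mᵀ.mulVecLin.finrank_range_add_finrank_ker
    have hMt : Mᵀ.rank = Fintype.card m := by
      rw [rank_transpose, ← mulVec_injective_iff_rank_eq]
      exact hM
    rw [Module.finrank_fintype_fun_eq_card] at h
    rw [LinearMap.finrank_range_of_inj hU, Module.finrank_fintype_fun_eq_card]
    change Mᵀ.rank + _ = _ at h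
    omega

theorem eq_zero_of_saddlePoint [Fintype n] [Fintype r] [DecidableEq r] {L : Matrix n n 𝕜} {M : Matrix n m 𝕜}
    {U : Matrix n r 𝕜} {V : Matrix r n 𝕜} (hM : Function.Injective M.mulVec) (hMU : Mᵀ * U = 0)
    (hVM : V * M = 0) (hVU : V * U = 1) (hVLU : Function.Injective (V * L * U).mulVec)
    (hcard : Fintype.card m + Fintype.card r = Fintype.card n) {w : n → 𝕜} {Ω : m → 𝕜}
    (h₁ : L *ᵥ w + M *ᵥ Ω = 0) (h₂ : Mᵀ *ᵥ w = 0) : w = 0 ∧ Ω = 0 := by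
  have hw : w ∈ LinearMap.ker Mᵀ.mulVecLin := h₂
  rw [← range_mulVecLin_eq_ker_transpose hM (mulVec_injective_of_mul_eq_one hVU) hMU hcard] at hw
  obtain ⟨y, rfl⟩ := hw
  rw [mulVecLin_apply] at h₁ ⊢
  obtain rfl : y = 0 := hVLU <| by
    simpa [mulVec_add, mulVec_mulVec, hVM, ← Matrix.mul_assoc] using congrArg (V *ᵥ ·) h₁
  rw [mulVec_zero, mulVec_zero, zero_add] at h₁
  exact ⟨mulVec_zero U, hM (by rw [h₁, mulVec_zero])⟩

theorem isUnit_fromBlocks_transpose_zero [Fintype n] [Fintype r] [DecidableEq n] [DecidableEq m] [DecidableEq r]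
    {L : Matrix n n 𝕜} {M : Matrix n m 𝕜} {U : Matrix n r 𝕜} {V : Matrix r n 𝕜}
    (hM : Function.Injective M.mulVec) (hMU : Mᵀ * U = 0) (hVM : V * M = 0) (hVU : V * U = 1)
    (hVLU : Function.Injective (V * L * U).mulVec)
    (hcard : Fintype.card m + Fintype.card r = Fintype.card n) :
    IsUnit (fromBlocks L M Mᵀ 0) := by
  suffices hker : ∀ v, fromBlocks L M Mᵀ 0 *ᵥ v = 0 → v = 0 from
    mulVec_injective_iff_isUnit.mp (LinearMap.ker_eq_bot.mp (ker_mulVecLin_eq_bot_iff.mpr hker))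
  intro v hv
  rw [fromBlocks_mulVec, zero_mulVec, add_zero, ← Sum.elim_zero_zero, Sum.elim_eq_iff] at hv
  obtain ⟨hw, hΩ⟩ := eq_zero_of_saddlePoint hM hMU hVM hVU hVLU hcard hv.1 hv.2
  rw [← Sum.elim_comp_inl_inr v, hw, hΩ, Sum.elim_zero_zero]

end Field

section Projector

variable {𝕜 n p q : Type*} [Field 𝕜] [Fintype n] [Fintype p] [Fintype q] [DecidableEq p]

theorem isUnit_transpose_mul_self [LinearOrder 𝕜] [IsStrictOrderedRing 𝕜] {A : Matrix n p 𝕜}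
    (hA : Function.Injective A.mulVec) : IsUnit (Aᵀ * A) := by
  rw [← mulVec_injective_iff_isUnit, mulVec_injective_iff_rank_eq, rank_transpose_mul_self,
    ← mulVec_injective_iff_rank_eq]
  exact hA

variable [DecidableEq n]

-- Only meaningful when `AᵀA` is invertible: otherwise the junk inverse `0` makes this `1`.
def projKerTranspose (A : Matrix n p 𝕜) : Matrix n n 𝕜 := 1 - A * (Aᵀ * A)⁻¹ * Aᵀ

variable {A : Matrix n p 𝕜}

theorem projKerTranspose_mul (hA : IsUnit (Aᵀ * A)) : projKerTranspose A * A = 0 := by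
  rw [projKerTranspose, Matrix.sub_mul, Matrix.mul_assoc _ Aᵀ, Matrix.mul_assoc A,
    nonsing_inv_mul _ ((isUnit_iff_isUnit_det _).mp hA), Matrix.mul_one, Matrix.one_mul, sub_self]

theorem transpose_mul_projKerTranspose (hA : IsUnit (Aᵀ * A)) :
    Aᵀ * projKerTranspose A = 0 := by
  rw [projKerTranspose, Matrix.mul_sub, ← Matrix.mul_assoc, ← Matrix.mul_assoc,
    mul_nonsing_inv _ ((isUnit_iff_isUnit_det _).mp hA), Matrix.one_mul, Matrix.mul_one, sub_self]

theorem projKerTranspose_mul_self (hA : IsUnit (Aᵀ * A)) :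
    projKerTranspose A * projKerTranspose A = projKerTranspose A := by
  nth_rewrite 2 [projKerTranspose]
  rw [Matrix.mul_sub, Matrix.mul_one, ← Matrix.mul_assoc, ← Matrix.mul_assoc,
    projKerTranspose_mul hA, Matrix.zero_mul, Matrix.zero_mul, sub_zero]

theorem exists_dual_of_projector [DecidableEq q] {B : Matrix n q 𝕜} {R : Matrix n n 𝕜}
    (hA : Function.Injective A.mulVec) (hRA : R * A = 0) (hAR : Aᵀ * R = 0) (hRR : R * R = R)
    (hRB : Function.Injective (R * B).mulVec)
    (hcard : Fintype.card p + Fintype.card q = Fintype.card n) :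
    ∃ (V : Matrix q n 𝕜) (X : Matrix p n 𝕜), V * A = 0 ∧ V * B = 1 ∧ V * (R * B) = 1 ∧
      X * A = 1 ∧ X * B = 0 ∧ R * B * V = R := by
  obtain ⟨V₀, hV₀⟩ := exists_mul_eq_one_of_mulVec_injective hRB
  obtain ⟨P, hP⟩ := exists_mul_eq_one_of_mulVec_injective hA
  have hVB : V₀ * R * B = 1 := by rw [Matrix.mul_assoc, hV₀]
  refine ⟨V₀ * R, P * (1 - B * (V₀ * R)), by rw [Matrix.mul_assoc, hRA, Matrix.mul_zero], hVB,
    by rw [← Matrix.mul_assoc, Matrix.mul_assoc V₀, hRR, hVB], ?_, ?_, ?_⟩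
  · rw [Matrix.mul_assoc, Matrix.sub_mul, Matrix.mul_assoc B, Matrix.mul_assoc V₀, hRA,
      Matrix.mul_zero, Matrix.mul_zero, Matrix.one_mul, sub_zero, hP]
  · rw [Matrix.mul_assoc, Matrix.sub_mul, Matrix.mul_assoc B, hVB, Matrix.mul_one, Matrix.one_mul,
      sub_self, Matrix.mul_zero]
  · have hrange := range_mulVecLin_eq_ker_transpose hA hRB
      (by rw [← Matrix.mul_assoc, hAR, Matrix.zero_mul]) hcard
    refine mulVec_injective (funext fun v => ?_)
    obtain ⟨y, hy⟩ : R *ᵥ v ∈ LinearMap.range (R * B).mulVecLin := by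
      rw [hrange, LinearMap.mem_ker, mulVecLin_apply, mulVec_mulVec, hAR, zero_mulVec]
    rw [mulVecLin_apply] at hy
    rw [← mulVec_mulVec, ← mulVec_mulVec v V₀ R, ← hy, mulVec_mulVec y V₀, hV₀, one_mulVec, hy]

end Projector

section PiKron

variable {R ι : Type*} [CommSemiring R] [Fintype ι] {α β γ : ι → Type*}

def piKron (M : ∀ i, Matrix (α i) (β i) R) : Matrix (∀ i, α i) (∀ i, β i) R :=
  of fun a b => ∏ i, M i (a i) (b i)

theorem piKron_mul [DecidableEq ι] [∀ i, Fintype (β i)] (M : ∀ i, Matrix (α i) (β i) R)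
    (N : ∀ i, Matrix (β i) (γ i) R) : piKron M * piKron N = piKron fun i => M i * N i := by
  ext a c
  simp only [piKron, mul_apply, of_apply, Fintype.prod_sum, Finset.prod_mul_distrib]

theorem piKron_one [DecidableEq ι] [∀ i, DecidableEq (α i)] :
    piKron (fun i => (1 : Matrix (α i) (α i) R)) = 1 := by
  ext a b
  simp only [piKron, of_apply, one_apply, Finset.prod_boole, Finset.mem_univ, true_implies,
    funext_iff]

theorem piKron_eq_zero {M : ∀ i, Matrix (α i) (β i) R} (i : ι) (h : M i = 0) :
    piKron M = 0 := by
  ext a b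
  exact Finset.prod_eq_zero (Finset.mem_univ i) (by simp [h])

theorem transpose_piKron (M : ∀ i, Matrix (α i) (β i) R) :
    (piKron M)ᵀ = piKron fun i => (M i)ᵀ := rfl

end PiKron

theorem submatrix_one_finCast {α : Type*} [Zero α] [One α] {a b : ℕ} (h : a = b) :
    (1 : Matrix (Fin b) (Fin b) α).submatrix (Fin.cast h) (Fin.cast h) = 1 :=
  submatrix_one_equiv (finCongr h)

theorem transpose_submatrix_mul_submatrix {α l m n o p : Type*} [CommSemiring α] [Fintype m]
    (M : Matrix m l α) (N : Matrix m o α) (e : n → l) (f : p → o) :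
    (M.submatrix id e)ᵀ * N.submatrix id f = (Mᵀ * N).submatrix e f := by
  rw [transpose_submatrix, ← submatrix_mul _ _ _ id _ Function.bijective_id]

end Matrix

section MBlock

variable {n p q k : ℕ}

def mFactor (B : Matrix (Fin n) (Fin q) ℝ) (A : Matrix (Fin n) (Fin p) ℝ) (i j : Fin k) :
    Matrix (Fin n) (Fin (mCol q p n i j)) ℝ :=
  if h₁ : j < i then B.submatrix id (Fin.cast (by simp [mCol, h₁]))
  else if h₂ : j = i then A.submatrix id (Fin.cast (by simp [mCol, h₂]))
  else (1 : Matrix (Fin n) (Fin n) ℝ).submatrix id (Fin.cast (by simp [mCol, h₁, h₂]))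

theorem mBlock_eq_piKron (B : Matrix (Fin n) (Fin q) ℝ) (A : Matrix (Fin n) (Fin p) ℝ)
    (i : Fin k) : mBlock B A i = piKron (mFactor B A i) := by
  ext r c
  simp only [mBlock, piKron, of_apply]
  refine Finset.prod_congr rfl fun j _ => ?_
  unfold mFactor
  split_ifs <;> rfl

theorem mFactor_of_lt {B : Matrix (Fin n) (Fin q) ℝ} {A : Matrix (Fin n) (Fin p) ℝ}
    {i j : Fin k} (h : j < i) :
    mFactor B A i j = B.submatrix id (Fin.cast (by simp [mCol, h])) :=
  dif_pos h

theorem mFactor_self {B : Matrix (Fin n) (Fin q) ℝ} {A : Matrix (Fin n) (Fin p) ℝ} {i : Fin k} :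
    mFactor B A i i = A.submatrix id (Fin.cast (by simp [mCol])) := by
  rw [mFactor, dif_neg (lt_irrefl i), dif_pos rfl]

theorem mFactor_of_gt {B : Matrix (Fin n) (Fin q) ℝ} {A : Matrix (Fin n) (Fin p) ℝ}
    {i j : Fin k} (h : i < j) :
    mFactor B A i j = (1 : Matrix (Fin n) (Fin n) ℝ).submatrix id
      (Fin.cast (by simp [mCol, h.ne', not_lt_of_gt h])) := by
  rw [mFactor, dif_neg (not_lt_of_gt h), dif_neg h.ne']

variable {B : Matrix (Fin n) (Fin q) ℝ} {A : Matrix (Fin n) (Fin p) ℝ}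
  {W₁ : Matrix (Fin q) (Fin n) ℝ} {W₂ : Matrix (Fin p) (Fin n) ℝ}

theorem transpose_mFactor_mul_mFactor_self (h₁ : W₁ * B = 1) (h₂ : W₂ * A = 1) (i j : Fin k) :
    (mFactor W₁ᵀ W₂ᵀ i j)ᵀ * mFactor B A i j = 1 := by
  rcases lt_trichotomy j i with h | rfl | h
  · rw [mFactor_of_lt h, mFactor_of_lt h, transpose_submatrix_mul_submatrix, transpose_transpose,
      h₁, submatrix_one_finCast]
  · rw [mFactor_self, mFactor_self, transpose_submatrix_mul_submatrix, transpose_transpose,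
      h₂, submatrix_one_finCast]
  · rw [mFactor_of_gt h, mFactor_of_gt h, transpose_submatrix_mul_submatrix, transpose_one,
      Matrix.one_mul, submatrix_one_finCast]

theorem transpose_mFull_mul_mFull (h₁ : W₁ * B = 1) (h₂ : W₂ * A = 1) (h₁₂ : W₁ * A = 0)
    (h₂₁ : W₂ * B = 0) : (mFull k W₁ᵀ W₂ᵀ)ᵀ * mFull k B A = 1 := by
  ext ⟨i, a⟩ ⟨i', b⟩
  change ((mBlock W₁ᵀ W₂ᵀ i)ᵀ * mBlock B A i') a b = _
  rw [mBlock_eq_piKron, mBlock_eq_piKron, transpose_piKron, piKron_mul]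
  rcases lt_trichotomy i i' with h | rfl | h
  · rw [piKron_eq_zero i (by
      rw [mFactor_self, mFactor_of_lt h, transpose_submatrix_mul_submatrix, transpose_transpose,
        h₂₁]; rfl)]
    simp [one_apply, h.ne]
  · simp [transpose_mFactor_mul_mFactor_self h₁ h₂, piKron_one, one_apply]
  · rw [piKron_eq_zero i' (by
      rw [mFactor_self, mFactor_of_lt h, transpose_submatrix_mul_submatrix, transpose_transpose,
        h₁₂]; rfl)]
    simp [one_apply, h.ne']

theorem piKron_mul_mFull_eq_zero {κ : Type*} {Y : Matrix κ (Fin n) ℝ} (hYA : Y * A = 0) :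
    piKron (fun _ : Fin k => Y) * mFull k B A = 0 := by
  ext r ⟨i, c⟩
  change (piKron (fun _ : Fin k => Y) * mBlock B A i) r c = 0
  rw [mBlock_eq_piKron, piKron_mul, piKron_eq_zero i (by
    rw [mFactor_self, ← Y.submatrix_id_id, ← submatrix_mul _ _ _ _ _ Function.bijective_id, hYA]
    rfl)]
  rfl

end MBlock

section CardMCol

open Finset

theorem prod_mCol {q p n k : ℕ} (i : Fin k) :
    ∏ j, mCol q p n i j = q ^ (i : ℕ) * p * n ^ (k - 1 - i) := by
  have hsplit : (univ : Finset (Fin k)) = Iio i ∪ ({i} ∪ Ioi i) := by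
    ext j
    simpa [le_iff_lt_or_eq, eq_comm] using lt_or_ge j i
  have hlt (j) (hj : j ∈ Iio i) : mCol q p n i j = q := if_pos (mem_Iio.mp hj)
  have hgt (j) (hj : j ∈ Ioi i) : mCol q p n i j = n := by
    have := mem_Ioi.mp hj
    simp [mCol, this.ne', not_lt_of_gt this]
  rw [hsplit, prod_union (by simp [disjoint_left]), prod_union (by simp), prod_singleton,
    prod_congr rfl hlt, prod_congr rfl hgt, prod_const, prod_const, Fin.card_Iio, Fin.card_Ioi]
  simp [mCol, mul_assoc]

theorem card_sigma_mCol {q p n : ℕ} (hqp : q + p = n) (k : ℕ) :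
    Fintype.card (Σ i : Fin k, ∀ j : Fin k, Fin (mCol q p n i j)) + q ^ k = n ^ k := by
  simp only [Fintype.card_sigma, Fintype.card_pi, Fintype.card_fin, prod_mCol]
  rw [Fin.sum_univ_eq_sum_range (fun i => q ^ i * p * n ^ (k - 1 - i)), ← hqp, add_comm q p,
    ← geom_sum₂_mul_add p q, geom_sum₂_comm, sum_mul]
  congr 1
  exact sum_congr rfl fun i _ => by ring

end CardMCol

theorem isUnit_fromBlocks_mFull {n p q : ℕ} (k : ℕ) {A : Matrix (Fin n) (Fin p) ℝ}
    {B U : Matrix (Fin n) (Fin q) ℝ} {V : Matrix (Fin q) (Fin n) ℝ} {X : Matrix (Fin p) (Fin n) ℝ}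
    (hVA : V * A = 0) (hVB : V * B = 1) (hVU : V * U = 1) (hXA : X * A = 1) (hXB : X * B = 0)
    (hAU : Aᵀ * U = 0) (hqp : q + p = n) {L : Matrix (Fin k → Fin n) (Fin k → Fin n) ℝ}
    (hL : (kronPow k (U * V) * L * kronPow k (U * V)).rank = q ^ k) :
    IsUnit (fromBlocks L (mFull k B A) (mFull k B A)ᵀ 0) := by
  set Uk := piKron fun _ : Fin k => U
  set Vk := piKron fun _ : Fin k => V
  have hkron : kronPow k (U * V) = Uk * Vk := (piKron_mul _ _).symm
  have hVLU : (Vk * L * Uk).rank = Fintype.card (Fin k → Fin q) := by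
    refine le_antisymm (rank_le_card_width _) ?_
    calc Fintype.card (Fin k → Fin q) = (Uk * (Vk * L * Uk) * Vk).rank := by
          simp only [← hL, hkron, Matrix.mul_assoc, Fintype.card_fun, Fintype.card_fin]
      _ ≤ (Vk * L * Uk).rank := (rank_mul_le_left _ _).trans (rank_mul_le_right _ _)
  have hMU : (mFull k B A)ᵀ * Uk = 0 := by
    rw [← transpose_transpose Uk, ← transpose_mul, transpose_piKron, piKron_mul_mFull_eq_zero
      (by rw [← transpose_transpose A, ← transpose_mul, hAU, transpose_zero]), transpose_zero]
  have hVU : Vk * Uk = 1 := by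
    rw [piKron_mul, ← piKron_one]
    exact congrArg piKron (funext fun _ => hVU)
  exact isUnit_fromBlocks_transpose_zero
    (mulVec_injective_of_mul_eq_one (transpose_mFull_mul_mFull hVB hXA hVA hXB)) hMU
    (piKron_mul_mFull_eq_zero hVA) hVU (mulVec_injective_iff_rank_eq.mpr hVLU)
    (by simpa [Fintype.card_fun] using card_sigma_mCol hqp k)

theorem stmt17_general {n1 n2 : ℕ} (hn : n2 < n1) (A12 : Matrix (Fin n1) (Fin n2) ℝ)
    (hA : A12.rank = n2)
    (R : Matrix (Fin n1) (Fin n1) ℝ)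
    (hR : R = 1 - A12 * (A12ᵀ * A12)⁻¹ * A12ᵀ)
    (Itil : Matrix (Fin n1) (Fin (n1 - n2)) ℝ)
    (hItil : (R * Itil).rank = n1 - n2)
    (k : ℕ)
    (L : Matrix (Fin k → Fin n1) (Fin k → Fin n1) ℝ)
    (hL : (kronPow k R * L * kronPow k R).rank = (n1 - n2) ^ k) :
    IsUnit (Matrix.fromBlocks L (mFull k Itil A12) (mFull k Itil A12)ᵀ 0)
    ∧ Fintype.card
        ((Fin k → Fin n1) ⊕ (Σ i : Fin k, ∀ j : Fin k, Fin (mCol (n1 - n2) n2 n1 i j)))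
        = 2 * n1 ^ k - (n1 - n2) ^ k
    ∧ ∀ b : (Fin k → Fin n1) → ℝ,
        ∃! wΩ : ((Fin k → Fin n1) → ℝ)
            × ((Σ i : Fin k, ∀ j : Fin k, Fin (mCol (n1 - n2) n2 n1 i j)) → ℝ),
          L.mulVec wΩ.1 + (mFull k Itil A12).mulVec wΩ.2 = b
          ∧ (mFull k Itil A12)ᵀ.mulVec wΩ.1 = 0 := by
  have hA' : Function.Injective A12.mulVec := mulVec_injective_iff_rank_eq.mpr (by simpa)
  have hG := isUnit_transpose_mul_self hA'
  have hRA : R * A12 = 0 := hR ▸ projKerTranspose_mul hG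
  have hAR : A12ᵀ * R = 0 := hR ▸ transpose_mul_projKerTranspose hG
  have hRR : R * R = R := hR ▸ projKerTranspose_mul_self hG
  have hRI : Function.Injective (R * Itil).mulVec := mulVec_injective_iff_rank_eq.mpr (by simpa)
  have hcols : n1 - n2 + n2 = n1 := Nat.sub_add_cancel hn.le
  obtain ⟨V, X, hVA, hVI, hVU, hXA, hXI, hUV⟩ :=
    exists_dual_of_projector hA' hRA hAR hRR hRI (by simp only [Fintype.card_fin]; omega)
  have hAU : A12ᵀ * (R * Itil) = 0 := by rw [← Matrix.mul_assoc, hAR, Matrix.zero_mul]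
  rw [← hUV] at hL
  have hunit := isUnit_fromBlocks_mFull k hVA hVI hVU hXA hXI hAU hcols hL
  refine ⟨hunit, ?_, fun b => by simpa using existsUnique_of_isUnit_fromBlocks hunit b 0⟩
  have hcard := card_sigma_mCol hcols k
  simp only [Fintype.card_sum, Fintype.card_fun, Fintype.card_fin] at hcard ⊢
  omega

/-- Saddle-point solvability for the sparse monolithic formulation: with `A12` of
full column rank (`n2 < n1`), `R = I - A12 (A12ᵀ A12)⁻¹ A12ᵀ`, `Ĩ` such that `R Ĩ`
has full column rank `n1 - n2`, and `L` with `rank (R^{⊗k} L R^{⊗k}) = (n1-n2)^k`,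
the square block matrix `[[L, M̃], [M̃ᵀ, 0]]` with `M̃ = M_k^{Ĩ}(A12)`, of size
`2 n1^k - (n1-n2)^k`, is invertible; in particular for every right-hand side
`(b, 0)` the augmented system `L ŵ + M̃ Ω = b`, `M̃ᵀ ŵ = 0` has a unique solution. -/
theorem stmt17 {n1 n2 : ℕ} (hn : n2 < n1) (A12 : Matrix (Fin n1) (Fin n2) ℝ)
    (hA : A12.rank = n2)
    (R : Matrix (Fin n1) (Fin n1) ℝ)
    (hR : R = 1 - A12 * (A12ᵀ * A12)⁻¹ * A12ᵀ)
    (Itil : Matrix (Fin n1) (Fin (n1 - n2)) ℝ)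
    (hItil : (R * Itil).rank = n1 - n2)
    (k : ℕ) (hk : 0 < k)
    (L : Matrix (Fin k → Fin n1) (Fin k → Fin n1) ℝ)
    (hL : (kronPow k R * L * kronPow k R).rank = (n1 - n2) ^ k) :
    IsUnit (Matrix.fromBlocks L (mFull k Itil A12) (mFull k Itil A12)ᵀ 0)
    ∧ Fintype.card
        ((Fin k → Fin n1) ⊕ (Σ i : Fin k, ∀ j : Fin k, Fin (mCol (n1 - n2) n2 n1 i j)))
        = 2 * n1 ^ k - (n1 - n2) ^ k
    ∧ ∀ b : (Fin k → Fin n1) → ℝ,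
        ∃! wΩ : ((Fin k → Fin n1) → ℝ)
            × ((Σ i : Fin k, ∀ j : Fin k, Fin (mCol (n1 - n2) n2 n1 i j)) → ℝ),
          L.mulVec wΩ.1 + (mFull k Itil A12).mulVec wΩ.2 = b
          ∧ (mFull k Itil A12)ᵀ.mulVec wΩ.1 = 0 :=
  stmt17_general hn A12 hA R hR Itil hItil k L hL
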